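/- For every k ∈ ℕ, the residual r_k(y^k) := ‖y^k − prox_g(y^k − ∇f(x^k) − 𝒢_k(y^k − x^k))‖ of the subproblem satisfies r_k(y^k) ≤ √2 · μ̲^{−1/2} (2 + ‖𝒢_k‖) √ε_k ‖d^k‖. -/

import Mathlib

open Set Filter
open scoped RealInnerProductSpace ENNReal

noncomputable section

attribute [local instance] Classical.propDecidable

variable {X : Type*} [NormedAddCommGroup X] [InnerProductSpace ℝ X] [FiniteDimensional ℝ X]

/-- `g` extended by `+∞` outside its domain `s`. -/
def extE (g : X → ℝ) (s : Set X) (x : X) : EReal := if x ∈ s then (g x : EReal) else ⊤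

/-- The objective `F = f + g`, extended-real valued. -/
def FE (f g : X → ℝ) (s : Set X) (x : X) : EReal := (f x : EReal) + extE g s x

/-- The strongly convex model `Θ_k` with base point `xk` and metric `G`, evaluated at `z`. -/
def Theta (f g : X → ℝ) (fgrad : X → X) (G : X →L[ℝ] X) (xk z : X) : ℝ :=
  f xk + ⟪fgrad xk, z - xk⟫ + (1/2) * ⟪z - xk, G (z - xk)⟫ + g z

/-- `p` is the proximal point `prox^D_{γ g}(u)`, i.e. the minimizer over `dom g` of
`z ↦ (1/(2γ)) ⟪ z - u, D (z - u) ⟫ + g z`. -/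
def IsProxPt (γ : ℝ) (D : X →L[ℝ] X) (g : X → ℝ) (s : Set X) (u p : X) : Prop :=
  p ∈ s ∧ ∀ z ∈ s,
    (1 / (2 * γ)) * ⟪p - u, D (p - u)⟫ + g p ≤
      (1 / (2 * γ)) * ⟪z - u, D (z - u)⟫ + g z

/-!
Both the exact model minimizer `x̄` and the proximal point `p` satisfy a variational
inequality for `g` (first-order optimality of a smooth function plus a convex one). Testing each
inequality at the other point and adding them kills `g`, leaving
`‖y - p‖ ≤ (1 + ‖𝒢‖) ‖x̄ - y‖`. Strong convexity of `Θ` and the inexactness criterion give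
`μ ‖y - x̄‖² ≤ 2 ε ‖d‖²`, which turns this into the stated bound.
-/

theorem IsMinOn.fderiv_add_sub_nonneg {E : Type*} [NormedAddCommGroup E] [NormedSpace ℝ E]
    {ψ g : E → ℝ} {ψ' : E →L[ℝ] ℝ} {s : Set E} {w z : E} (hg : ConvexOn ℝ s g)
    (hmin : IsMinOn (ψ + g) s w) (hw : w ∈ s) (hz : z ∈ s) (hψ : HasFDerivAt ψ ψ' w) :
    0 ≤ ψ' (z - w) + (g z - g w) := by
  -- Along the segment, replacing `g` by its chord keeps `w` a minimizer and makes the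
  -- objective differentiable; Fermat's rule at the endpoint `t = 0` gives the inequality.
  set φ : ℝ → ℝ := fun t => ψ (w + t • (z - w)) + t * (g z - g w)
  have hφ_min : IsMinOn φ (Icc 0 1) 0 := by
    intro t ⟨ht₀, ht₁⟩
    have hpt : (1 - t) • w + t • z = w + t • (z - w) := by
      rw [smul_sub, sub_smul, one_smul]; abel
    have hg_le : g (w + t • (z - w)) ≤ g w + t * (g z - g w) := by
      have := hg.2 hw hz (sub_nonneg.2 ht₁) ht₀ (sub_add_cancel 1 t)
      rw [smul_eq_mul, smul_eq_mul, hpt] at this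
      linarith
    have hψg : ψ w + g w ≤ ψ (w + t • (z - w)) + g (w + t • (z - w)) :=
      hmin (hpt ▸ hg.1 hw hz (sub_nonneg.2 ht₁) ht₀ (sub_add_cancel 1 t))
    show φ 0 ≤ φ t
    simp only [φ, zero_smul, add_zero, zero_mul]
    linarith
  have hline : HasDerivAt (fun t : ℝ => w + t • (z - w)) (z - w) 0 := by
    simpa using ((hasDerivAt_id (0 : ℝ)).smul_const (z - w)).const_add w
  have hφ_deriv : HasDerivAt φ (ψ' (z - w) + (g z - g w)) 0 := by
    have hψ₀ : HasFDerivAt ψ ψ' (w + (0 : ℝ) • (z - w)) := by simpa using hψ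
    exact ((hψ₀.comp_hasDerivAt 0 hline).add
      ((hasDerivAt_id (0 : ℝ)).mul_const (g z - g w))).congr_deriv (by simp)
  have hseg : segment ℝ (0 : ℝ) (0 + 1) ⊆ Icc 0 1 := by
    rw [zero_add, segment_eq_Icc zero_le_one]
  simpa using hφ_min.localize.hasFDerivWithinAt_nonneg hφ_deriv.hasFDerivAt.hasFDerivWithinAt
    (mem_posTangentConeAt_of_segment_subset hseg)

theorem le_sqrt_two_mul_inv_sqrt_mul_sqrt_mul_of_mul_sq_le {μ ε a b : ℝ} (hμ : 0 < μ)
    (ha : 0 ≤ a) (hb : 0 ≤ b) (h : μ * a ^ 2 ≤ 2 * ε * b ^ 2) :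
    a ≤ √2 * (√μ)⁻¹ * √ε * b := by
  calc a = √(a ^ 2) := (Real.sqrt_sq ha).symm
    _ ≤ √(2 / μ * (ε * b ^ 2)) := by
      refine Real.sqrt_le_sqrt ?_
      rw [div_mul_eq_mul_div, le_div_iff₀ hμ]
      linarith
    _ = √2 * (√μ)⁻¹ * √ε * b := by
      rw [Real.sqrt_mul (by positivity), Real.sqrt_mul' _ (sq_nonneg b), Real.sqrt_sq hb,
        Real.sqrt_div' _ hμ.le]
      ring

section QuadraticModel

variable {E : Type*} [NormedAddCommGroup E] [InnerProductSpace ℝ E]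

theorem norm_le_one_add_opNorm_mul_of_inner_add_nonpos {Q : E →L[ℝ] E}
    (hQ : ∀ v, 0 ≤ ⟪v, Q v⟫) {e h : E} (H : ⟪Q h + e, e + h⟫ ≤ 0) :
    ‖e‖ ≤ (1 + ‖Q‖) * ‖h‖ := by
  have hexpand : ⟪Q h + e, e + h⟫ = ⟪Q h, e⟫ + ⟪h, Q h⟫ + ‖e‖ ^ 2 + ⟪e, h⟫ := by
    rw [inner_add_left, inner_add_right, inner_add_right, real_inner_comm (Q h) h,
      real_inner_self_eq_norm_sq]
    ring
  have hQhe : -⟪Q h, e⟫ ≤ ‖Q‖ * ‖h‖ * ‖e‖ :=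
    (neg_le_abs _).trans <| (abs_real_inner_le_norm _ _).trans <|
      mul_le_mul_of_nonneg_right (Q.le_opNorm h) (norm_nonneg e)
  have heh : -⟪e, h⟫ ≤ ‖e‖ * ‖h‖ := (neg_le_abs _).trans (abs_real_inner_le_norm _ _)
  have hsq : ‖e‖ * ‖e‖ ≤ (1 + ‖Q‖) * ‖h‖ * ‖e‖ := by nlinarith [hQ h]
  rcases (norm_nonneg e).eq_or_lt with he | he
  · rw [← he]; positivity
  · exact le_of_mul_le_mul_right hsq he

theorem LinearMap.IsSymmetric.inner_map_add_add {Q : E →L[ℝ] E}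
    (hQ : (Q : E →ₗ[ℝ] E).IsSymmetric) (u v : E) :
    ⟪u + v, Q (u + v)⟫ = ⟪u, Q u⟫ + 2 * ⟪Q u, v⟫ + ⟪v, Q v⟫ := by
  rw [map_add, inner_add_left, inner_add_right, inner_add_right, real_inner_comm (Q v) u,
    hQ.apply_clm, real_inner_comm v (Q u)]
  ring

theorem LinearMap.IsSymmetric.hasFDerivAt_inner_map_sub {Q : E →L[ℝ] E}
    (hQ : (Q : E →ₗ[ℝ] E).IsSymmetric) (c w : E) :
    HasFDerivAt (fun v => ⟪v - c, Q (v - c)⟫) ((2 : ℝ) • innerSL ℝ (Q (w - c))) w := by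
  have hsub : HasFDerivAt (fun v => v - c) (ContinuousLinearMap.id ℝ E) w :=
    (hasFDerivAt_id w).sub_const c
  refine (hsub.inner ℝ (Q.hasFDerivAt.comp w hsub)).congr_fderiv
    (ContinuousLinearMap.ext fun h => ?_)
  simp only [ContinuousLinearMap.comp_apply, ContinuousLinearMap.prod_apply, fderivInnerCLM_apply,
    ContinuousLinearMap.id_apply, _root_.smul_apply, innerSL_apply_apply, smul_eq_mul,
    Function.comp_apply]
  rw [real_inner_comm, hQ.apply_clm, real_inner_comm h]
  ring

variable {f g : E → ℝ} {fgrad : E → E} {G : E →L[ℝ] E} {s : Set E} {xk w z : E}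

theorem Theta_sub_Theta (hG : (G : E →ₗ[ℝ] E).IsSymmetric) :
    Theta f g fgrad G xk z - Theta f g fgrad G xk w =
      ⟪fgrad xk + G (w - xk), z - w⟫ + (g z - g w) + 1 / 2 * ⟪z - w, G (z - w)⟫ := by
  have hsplit : z - xk = (w - xk) + (z - w) := by abel
  simp only [Theta]
  rw [hsplit, hG.inner_map_add_add, inner_add_right, inner_add_left]
  ring

theorem inner_grad_Theta_add_sub_nonneg (hg : ConvexOn ℝ s g)
    (hG : (G : E →ₗ[ℝ] E).IsSymmetric) (hmin : IsMinOn (Theta f g fgrad G xk) s w)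
    (hw : w ∈ s) (hz : z ∈ s) :
    0 ≤ ⟪fgrad xk + G (w - xk), z - w⟫ + (g z - g w) := by
  have hψ : HasFDerivAt (fun v => f xk + ⟪fgrad xk, v - xk⟫ + 1 / 2 * ⟪v - xk, G (v - xk)⟫)
      (innerSL ℝ (fgrad xk) + (1 / 2 : ℝ) • (2 : ℝ) • innerSL ℝ (G (w - xk))) w := by
    have hlin : HasFDerivAt (fun v => ⟪fgrad xk, v - xk⟫) (innerSL ℝ (fgrad xk)) w :=
      ((innerSL ℝ (fgrad xk)).hasFDerivAt.comp w ((hasFDerivAt_id w).sub_const xk)).congr_fderiv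
        (ContinuousLinearMap.comp_id _)
    refine ((hlin.add ((hG.hasFDerivAt_inner_map_sub xk w).const_mul (1 / 2))).const_add
      (f xk)).congr_of_eventuallyEq (.of_forall fun v => ?_)
    simp only [Pi.add_apply]
    ring
  simpa [inner_add_left, inner_sub_left] using IsMinOn.fderiv_add_sub_nonneg hg hmin hw hz hψ

theorem half_inner_le_Theta_sub_of_isMinOn (hg : ConvexOn ℝ s g)
    (hG : (G : E →ₗ[ℝ] E).IsSymmetric) (hmin : IsMinOn (Theta f g fgrad G xk) s w)
    (hw : w ∈ s) (hz : z ∈ s) :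
    1 / 2 * ⟪z - w, G (z - w)⟫ ≤ Theta f g fgrad G xk z - Theta f g fgrad G xk w := by
  rw [Theta_sub_Theta hG]
  linarith [inner_grad_Theta_add_sub_nonneg hg hG hmin hw hz]

theorem IsProxPt.inner_add_sub_nonneg {γ : ℝ} {D : E →L[ℝ] E} {u p : E}
    (hp : IsProxPt γ D g s u p) (hg : ConvexOn ℝ s g) (hD : (D : E →ₗ[ℝ] E).IsSymmetric)
    (hz : z ∈ s) :
    0 ≤ γ⁻¹ * ⟪D (p - u), z - p⟫ + (g z - g p) := by
  have := IsMinOn.fderiv_add_sub_nonneg hg (isMinOn_iff.2 hp.2) hp.1 hz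
    ((hD.hasFDerivAt_inner_map_sub u p).const_mul (1 / (2 * γ)))
  convert this using 2
  simp only [_root_.smul_apply, innerSL_apply_apply, smul_eq_mul]
  ring

theorem norm_sub_prox_le_of_isMinOn_Theta {y p : E} (hg : ConvexOn ℝ s g)
    (hG : (G : E →ₗ[ℝ] E).IsSymmetric) (hG_nonneg : ∀ v, 0 ≤ ⟪v, G v⟫)
    (hmin : IsMinOn (Theta f g fgrad G xk) s w) (hw : w ∈ s)
    (hp : IsProxPt 1 (ContinuousLinearMap.id ℝ E) g s (y - fgrad xk - G (y - xk)) p) :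
    ‖y - p‖ ≤ (1 + ‖G‖) * ‖w - y‖ := by
  have hmodel := inner_grad_Theta_add_sub_nonneg hg hG hmin hw hp.1
  have hprox := hp.inner_add_sub_nonneg hg (fun _ _ => rfl) hw
  rw [inv_one, one_mul, ContinuousLinearMap.id_apply, ← neg_sub p w, inner_neg_right] at hprox
  refine norm_le_one_add_opNorm_mul_of_inner_add_nonpos hG_nonneg ?_
  have hvec : G (w - y) + (y - p) =
      (fgrad xk + G (w - xk)) - (p - (y - fgrad xk - G (y - xk))) := by
    simp only [map_sub]; abel
  rw [hvec, show y - p + (w - y) = -(p - w) by abel, inner_neg_right, inner_sub_left]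
  linarith

end QuadraticModel

theorem residual_subproblem_bound_general
    (f g : X → ℝ) (domg : Set X) (fgrad : X → X)
    (hgconv : ConvexOn ℝ domg g)
    (μ : ℝ) (hμ : 0 < μ)
    (eps : ℕ → ℝ)
    (x y xbar : ℕ → X) (G : ℕ → X →L[ℝ] X)
    (hGsa : ∀ k, ∀ u v : X, ⟪G k u, v⟫ = ⟪u, G k v⟫)
    (hGlb : ∀ k, ∀ u : X, μ * ‖u‖ ^ 2 ≤ ⟪u, G k u⟫)
    (hxbar : ∀ k, xbar k ∈ domg ∧ ∀ z ∈ domg,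
      Theta f g fgrad (G k) (x k) (xbar k) ≤ Theta f g fgrad (G k) (x k) z)
    (hy : ∀ k, y k ∈ domg ∧
      Theta f g fgrad (G k) (x k) (y k) < Theta f g fgrad (G k) (x k) (x k) ∧
      Theta f g fgrad (G k) (x k) (y k) - Theta f g fgrad (G k) (x k) (xbar k)
        ≤ eps k * ‖y k - x k‖ ^ 2)
    (prox1 : X → X)
    (hprox1 : ∀ u : X, IsProxPt 1 (ContinuousLinearMap.id ℝ X) g domg u (prox1 u)) :
    ∀ k : ℕ,
      ‖y k - prox1 (y k - fgrad (x k) - G k (y k - x k))‖ ≤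
        Real.sqrt 2 * (Real.sqrt μ)⁻¹ * (2 + ‖G k‖) * Real.sqrt (eps k) * ‖y k - x k‖ := by
  intro k
  obtain ⟨hxbar_mem, hxbar_min⟩ := hxbar k
  obtain ⟨hy_mem, -, hy_inexact⟩ := hy k
  have hmin : IsMinOn (Theta f g fgrad (G k) (x k)) domg (xbar k) := isMinOn_iff.2 hxbar_min
  have hG_nonneg : ∀ v, 0 ≤ ⟪v, G k v⟫ := fun v =>
    (mul_nonneg hμ.le (sq_nonneg _)).trans (hGlb k v)
  have hresidual : ‖y k - prox1 (y k - fgrad (x k) - G k (y k - x k))‖ ≤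
      (1 + ‖G k‖) * ‖xbar k - y k‖ :=
    norm_sub_prox_le_of_isMinOn_Theta hgconv (hGsa k) hG_nonneg hmin hxbar_mem (hprox1 _)
  have hdist : μ * ‖xbar k - y k‖ ^ 2 ≤ 2 * eps k * ‖y k - x k‖ ^ 2 := by
    rw [norm_sub_rev]
    linarith [hGlb k (y k - xbar k),
      half_inner_le_Theta_sub_of_isMinOn hgconv (hGsa k) hmin hxbar_mem hy_mem]
  have hclose := le_sqrt_two_mul_inv_sqrt_mul_sqrt_mul_of_mul_sq_le hμ (norm_nonneg _)
    (norm_nonneg _) hdist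
  calc _ ≤ (1 + ‖G k‖) * ‖xbar k - y k‖ := hresidual
    _ ≤ (2 + ‖G k‖) * (√2 * (√μ)⁻¹ * √(eps k) * ‖y k - x k‖) := by
      gcongr
      linarith
    _ = _ := by ring

/-- bound on the subproblem residual `r_k(y^k)`. -/
theorem residual_subproblem_bound
    (f g : X → ℝ) (domg O : Set X) (fgrad : X → X)
    (hdom : domg.Nonempty) (hO : IsOpen O) (hclO : closure domg ⊆ O)
    (hgconv : ConvexOn ℝ domg g) (hgcont : ContinuousOn g domg)
    (hglsc : LowerSemicontinuous (extE g domg))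
    (hflsc : LowerSemicontinuous f)
    (hfC2 : ContDiffOn ℝ 2 f O)
    (hfgrad : ∀ z ∈ O, HasGradientAt f (fgrad z) z)
    (hFlb : ∃ c : ℝ, ∀ z ∈ domg, c ≤ f z + g z)
    (μ σ β : ℝ) (hμ : 0 < μ) (hβ : 0 < β ∧ β < 1) (hσ : 0 < σ ∧ σ < (1/2) * min 1 μ)
    (eps : ℕ → ℝ) (heps : ∀ k, 0 < eps k) (hepsbd : ∃ C : ℝ, ∀ k, eps k ≤ C)
    (kbar : ℕ) (hkbar : ∀ k, kbar ≤ k → eps k ≤ μ / 10)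
    (x y xbar : ℕ → X) (G : ℕ → X →L[ℝ] X) (m : ℕ → ℕ)
    (hx0 : x 0 ∈ domg)
    (hGsa : ∀ k, ∀ u v : X, ⟪G k u, v⟫ = ⟪u, G k v⟫)
    (hGlb : ∀ k, ∀ u : X, μ * ‖u‖ ^ 2 ≤ ⟪u, G k u⟫)
    (hxbar : ∀ k, xbar k ∈ domg ∧ ∀ z ∈ domg,
      Theta f g fgrad (G k) (x k) (xbar k) ≤ Theta f g fgrad (G k) (x k) z)
    (hy : ∀ k, y k ∈ domg ∧
      Theta f g fgrad (G k) (x k) (y k) < Theta f g fgrad (G k) (x k) (x k) ∧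
      Theta f g fgrad (G k) (x k) (y k) - Theta f g fgrad (G k) (x k) (xbar k)
        ≤ eps k * ‖y k - x k‖ ^ 2)
    (hls : ∀ k,
      (FE f g domg (x k + β ^ (m k) • (y k - x k))
        ≤ ((f (x k) + g (x k) - σ * β ^ (m k) * ‖y k - x k‖ ^ 2 : ℝ) : EReal)) ∧
      ∀ j < m k, ¬ (FE f g domg (x k + β ^ j • (y k - x k))
        ≤ ((f (x k) + g (x k) - σ * β ^ j * ‖y k - x k‖ ^ 2 : ℝ) : EReal)))
    (hupd : ∀ k,
      (FE f g domg (y k) < FE f g domg (x k + β ^ (m k) • (y k - x k)) ∧ x (k+1) = y k) ∨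
      ((¬ FE f g domg (y k) < FE f g domg (x k + β ^ (m k) • (y k - x k))) ∧
        x (k+1) = x k + β ^ (m k) • (y k - x k)))
    (prox1 : X → X)
    (hprox1 : ∀ u : X, IsProxPt 1 (ContinuousLinearMap.id ℝ X) g domg u (prox1 u)) :
    ∀ k : ℕ,
      ‖y k - prox1 (y k - fgrad (x k) - G k (y k - x k))‖ ≤
        Real.sqrt 2 * (Real.sqrt μ)⁻¹ * (2 + ‖G k‖) * Real.sqrt (eps k) * ‖y k - x k‖ :=
  residual_subproblem_bound_general f g domg fgrad hgconv μ hμ eps x y xbar G hGsa hGlb hxbar hy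
    prox1 hprox1
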